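/- (Ramanathan–Steger comparison with multiplicity) Let G be a locally compact Hausdorff abelian topological group (written additively), let Γ and Λ be uniformly discrete subsets of G, let N be a positive integer, and let H be a complex Hilbert space. Suppose {g_{γ,j}}_{γ∈Γ, 1≤j≤N} is a family in H satisfying the Riesz-sequence inequalities with lower bound A > 0 and some upper bound B > 0, i.e. A ∑_{γ,j} |a_{γ,j}|² ≤ ‖∑_{γ,j} a_{γ,j} g_{γ,j}‖² ≤ B ∑_{γ,j} |a_{γ,j}|² for every finitely supported family (a_{γ,j}) of complex numbers. Let ε > 0, let K ⊆ G be compact, and let {h_λ}_{λ∈Λ} be a family in H such that dist_H(g_{γ,j}, span{h_λ : λ ∈ Λ ∩ (γ + K)}) < ε for every γ ∈ Γ and every j = 1, …, N. Then for every compact set L ⊆ G one has (1 - A^{-1/2} ε) · N · card(Γ ∩ L) ≤ card(Λ ∩ (L + K)). -/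

import Mathlib

/-!
Only the finitely many `γ ∈ Γ ∩ L` matter, and for them every `g γ j` lies within `ε` of
`V = span {h λ : λ ∈ Λ ∩ (L + K)}`, a space of dimension at most `#(Λ ∩ (L + K))`. Let `g̃` be the
family biorthogonal to the `g γ j` inside `W = span g`; the lower Riesz bound gives
`‖g̃ i‖ ≤ A^{-1/2}`. Then `∑ i, ⟪g̃ i, P_V g i⟫ = tr (P_V P_W) ≤ dim V`, while each summand has real
part at least `1 - ‖g̃ i‖ ‖g i - P_V g i‖ ≥ 1 - ε / √A`.
-/

open Pointwise
open scoped InnerProductSpace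

noncomputable section

def UnifDiscrete {G : Type*} [AddGroup G] [TopologicalSpace G] (Λ : Set G) : Prop :=
  ∃ U : Set G, IsOpen U ∧ (0:G) ∈ U ∧ Λ.PairwiseDisjoint (fun x => x +ᵥ U)

open Module Submodule RCLike

def LowerRieszBound (𝕜 : Type*) {E ι : Type*} [NormedField 𝕜] [SeminormedAddCommGroup E]
    [Module 𝕜 E] [Fintype ι] (A : ℝ) (g : ι → E) : Prop :=
  ∀ a : ι → 𝕜, A * ∑ i, ‖a i‖ ^ 2 ≤ ‖∑ i, a i • g i‖ ^ 2

section Normed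

variable {𝕜 E ι : Type*} [NormedField 𝕜] [SeminormedAddCommGroup E] [Module 𝕜 E]

theorem lowerRieszBound_subtype_of_forall_finset {v : ι → E} {A : ℝ}
    (hR : ∀ (s : Finset ι) (a : ι → 𝕜), A * ∑ p ∈ s, ‖a p‖ ^ 2 ≤ ‖∑ p ∈ s, a p • v p‖ ^ 2)
    (s : Finset ι) : LowerRieszBound 𝕜 A fun p : s => v p := by
  classical
  intro a
  have hext : ∀ p : s, (if hp : (p : ι) ∈ s then a ⟨p, hp⟩ else 0) = a p := fun p => dif_pos p.2
  simpa only [← Finset.sum_coe_sort s, hext] using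
    hR s fun p => if hp : p ∈ s then a ⟨p, hp⟩ else 0

variable [Fintype ι] {g : ι → E} {A : ℝ}

theorem LowerRieszBound.linearIndependent (hR : LowerRieszBound 𝕜 A g) (hA : 0 < A) :
    LinearIndependent 𝕜 g := by
  rw [Fintype.linearIndependent_iff]
  intro a ha i
  have hsum : ∑ j, ‖a j‖ ^ 2 = 0 := by
    have := hR a
    rw [ha, norm_zero, zero_pow two_ne_zero] at this
    exact le_antisymm (nonpos_of_mul_nonpos_right this hA) (by positivity)
  simpa using (Finset.sum_eq_zero_iff_of_nonneg fun j _ => by positivity).1 hsum i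
    (Finset.mem_univ i)

theorem LowerRieszBound.norm_repr_span_le (hR : LowerRieszBound 𝕜 A g) (hA : 0 < A)
    (w : span 𝕜 (Set.range g)) (i : ι) :
    ‖(Basis.span (hR.linearIndependent hA)).repr w i‖ ≤ (√A)⁻¹ * ‖w‖ := by
  set b := Basis.span (hR.linearIndependent hA)
  have hw : ∑ j, b.repr w j • g j = (w : E) := by
    conv_rhs => rw [← b.sum_repr w]
    simp [b, Basis.span_apply]
  have hsq : (√A * ‖b.repr w i‖) ^ 2 ≤ ‖w‖ ^ 2 := by
    rw [mul_pow, Real.sq_sqrt hA.le]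
    calc A * ‖b.repr w i‖ ^ 2 ≤ A * ∑ j, ‖b.repr w j‖ ^ 2 := by
          gcongr
          exact Finset.single_le_sum (f := fun j => ‖b.repr w j‖ ^ 2)
            (fun j _ => by positivity) (Finset.mem_univ i)
      _ ≤ ‖w‖ ^ 2 := by simpa [hw] using hR (b.repr w)
  rw [inv_mul_eq_div, le_div_iff₀ (Real.sqrt_pos.2 hA), mul_comm]
  exact (pow_le_pow_iff_left₀ (by positivity) (norm_nonneg _) two_ne_zero).1 hsq

end Normed

section InnerProduct

variable {𝕜 E ι : Type*} [RCLike 𝕜] [NormedAddCommGroup E] [InnerProductSpace 𝕜 E]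

theorem Submodule.norm_sub_starProjection_eq_infDist (K : Submodule 𝕜 E)
    [K.HasOrthogonalProjection] (x : E) :
    ‖x - K.starProjection x‖ = Metric.infDist x K := by
  rw [starProjection_minimal, Metric.infDist_eq_iInf]
  simp [dist_eq_norm]

variable [Fintype ι] {g gd : ι → E} {A : ℝ}

theorem LowerRieszBound.exists_biorthogonal [DecidableEq ι] (hR : LowerRieszBound 𝕜 A g)
    (hA : 0 < A) :
    ∃ gd : ι → E, (∀ i, gd i ∈ span 𝕜 (Set.range g)) ∧
      (∀ i j, ⟪gd i, g j⟫_𝕜 = if i = j then 1 else 0) ∧ ∀ i, ‖gd i‖ ≤ (√A)⁻¹ := by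
  have := FiniteDimensional.span_of_finite 𝕜 (Set.finite_range g)
  have := FiniteDimensional.complete 𝕜 (span 𝕜 (Set.range g))
  set b := Basis.span (hR.linearIndependent hA)
  let φ : ι → StrongDual 𝕜 (span 𝕜 (Set.range g)) := fun i =>
    LinearMap.toContinuousLinearMap (b.coord i)
  have hφ : ∀ i, ‖φ i‖ ≤ (√A)⁻¹ := fun i =>
    ContinuousLinearMap.opNorm_le_bound _ (by positivity) (hR.norm_repr_span_le hA · i)
  refine ⟨fun i => (InnerProductSpace.toDual 𝕜 (span 𝕜 (Set.range g))).symm (φ i),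
    fun i => coe_mem _, fun i j => ?_, fun i => ?_⟩
  · rw [show g j = (b j : E) by simp [b, Basis.span_apply], ← coe_inner,
      InnerProductSpace.toDual_symm_apply]
    simp [φ, Finsupp.single_apply, eq_comm]
  · exact ((InnerProductSpace.toDual 𝕜 _).symm.norm_map (φ i)).trans_le (hφ i)

theorem starProjection_span_range_eq_sum [DecidableEq ι]
    [(span 𝕜 (Set.range g)).HasOrthogonalProjection]
    (hgd : ∀ i, gd i ∈ span 𝕜 (Set.range g))
    (hbi : ∀ i j, ⟪gd i, g j⟫_𝕜 = if i = j then 1 else 0) (x : E) :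
    (span 𝕜 (Set.range g)).starProjection x = ∑ i, ⟪g i, x⟫_𝕜 • gd i := by
  refine eq_starProjection_of_mem_of_inner_eq_zero (sum_mem fun i _ => smul_mem _ _ (hgd i))
    fun w hw => ?_
  suffices span 𝕜 (Set.range g) ≤ LinearMap.ker (innerₛₗ 𝕜 (x - ∑ i, ⟪g i, x⟫_𝕜 • gd i)) from
    this hw
  rw [span_le]
  rintro _ ⟨j, rfl⟩
  simp [hbi]

theorem re_sum_inner_starProjection_le_finrank [DecidableEq ι]
    (hgd : ∀ i, gd i ∈ span 𝕜 (Set.range g))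
    (hbi : ∀ i j, ⟪gd i, g j⟫_𝕜 = if i = j then 1 else 0)
    (V : Submodule 𝕜 E) [FiniteDimensional 𝕜 V] :
    re (∑ i, ⟪gd i, V.starProjection (g i)⟫_𝕜) ≤ finrank 𝕜 V := by
  have := FiniteDimensional.span_of_finite 𝕜 (Set.finite_range g)
  let e := stdOrthonormalBasis 𝕜 V
  -- both sides are the trace of `P_V ∘ P_W`, with `W = span (range g)`
  have htrace : ∑ i, ⟪gd i, V.starProjection (g i)⟫_𝕜 =
      ∑ k, ⟪(span 𝕜 (Set.range g)).starProjection (e k), (e k : E)⟫_𝕜 := by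
    simp_rw [starProjection_span_range_eq_sum hgd hbi]
    simp only [starProjection_apply, e.orthogonalProjectionOnto_apply_eq_sum, coe_sum, coe_smul,
      inner_sum, sum_inner, inner_smul_left, inner_smul_right, inner_conj_symm]
    rw [Finset.sum_comm]
  calc re (∑ i, ⟪gd i, V.starProjection (g i)⟫_𝕜)
      = ∑ k, ‖(span 𝕜 (Set.range g)).orthogonalProjectionOnto (e k)‖ ^ 2 := by
        simp only [htrace, map_sum, re_inner_starProjection_eq_normSq]
    _ ≤ ∑ _k, (1 : ℝ) := by
        gcongr with k
        calc ‖(span 𝕜 (Set.range g)).orthogonalProjectionOnto (e k)‖ ^ 2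
            ≤ ‖(e k : E)‖ ^ 2 := by
              gcongr; exact norm_orthogonalProjectionOnto_apply_le _ _
          _ = 1 := by rw [show ‖(e k : E)‖ = 1 from e.orthonormal.1 k, one_pow]
    _ = finrank 𝕜 V := by simp

theorem LowerRieszBound.one_sub_div_sqrt_mul_card_le_finrank (hR : LowerRieszBound 𝕜 A g)
    (hA : 0 < A) {ε : ℝ} (V : Submodule 𝕜 E) [FiniteDimensional 𝕜 V]
    (hV : ∀ i, Metric.infDist (g i) V ≤ ε) :
    (1 - ε / √A) * Fintype.card ι ≤ finrank 𝕜 V := by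
  classical
  obtain ⟨gd, hgdW, hbi, hgd⟩ := hR.exists_biorthogonal hA
  have hdiag : ∀ i, 1 - ε / √A ≤ re ⟪gd i, V.starProjection (g i)⟫_𝕜 := by
    intro i
    have hnear : ‖gd i‖ * ‖g i - V.starProjection (g i)‖ ≤ ε / √A := by
      rw [V.norm_sub_starProjection_eq_infDist, div_eq_inv_mul]
      exact mul_le_mul (hgd i) (hV i) Metric.infDist_nonneg (by positivity)
    have hsplit : ⟪gd i, V.starProjection (g i)⟫_𝕜 =
        1 - ⟪gd i, g i - V.starProjection (g i)⟫_𝕜 := by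
      rw [inner_sub_right, hbi, if_pos rfl, sub_sub_cancel]
    rw [hsplit, map_sub, one_re]
    linarith [re_le_norm ⟪gd i, g i - V.starProjection (g i)⟫_𝕜,
      norm_inner_le_norm (𝕜 := 𝕜) (gd i) (g i - V.starProjection (g i))]
  calc (1 - ε / √A) * Fintype.card ι = ∑ _i : ι, (1 - ε / √A) := by
        rw [Finset.sum_const, Finset.card_univ, nsmul_eq_mul, mul_comm]
    _ ≤ ∑ i, re ⟪gd i, V.starProjection (g i)⟫_𝕜 := Finset.sum_le_sum fun i _ => hdiag i
    _ = re (∑ i, ⟪gd i, V.starProjection (g i)⟫_𝕜) := (map_sum _ _ _).symm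
    _ ≤ finrank 𝕜 V := re_sum_inner_starProjection_le_finrank hgdW hbi V

end InnerProduct

theorem Set.PairwiseDisjoint.inter_vadd_subsingleton {G : Type*} [AddCommGroup G] {S U : Set G}
    (hS : S.PairwiseDisjoint fun x => x +ᵥ U) (x : G) : (S ∩ (x +ᵥ U)).Subsingleton := by
  rintro _ ⟨hγS, u, hu, rfl⟩ _ ⟨hγ'S, u', hu', rfl⟩
  by_contra hne
  -- `x + u + u'` lies in both translates
  refine Set.disjoint_left.1 (hS hγS hγ'S hne) ⟨u', hu', rfl⟩ ⟨u, hu, ?_⟩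
  simp only [vadd_eq_add]
  abel

theorem UnifDiscrete.finite_inter_of_isCompact {G : Type*} [AddCommGroup G] [TopologicalSpace G]
    [ContinuousAdd G] {S C : Set G} (hS : UnifDiscrete S) (hC : IsCompact C) :
    (S ∩ C).Finite := by
  obtain ⟨U, hUo, hU0, hdisj⟩ := hS
  obtain ⟨t, -, ht, hCt⟩ := hC.elim_finite_subcover_image (fun x _ => hUo.vadd x)
    fun x hx => Set.mem_biUnion hx ⟨0, hU0, add_zero x⟩
  refine (ht.biUnion fun x _ => (hdisj.inter_vadd_subsingleton x).finite).subset ?_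
  rintro γ ⟨hγS, hγC⟩
  obtain ⟨x, hx, hγx⟩ := Set.mem_iUnion₂.1 (hCt hγC)
  exact Set.mem_iUnion₂.2 ⟨x, hx, hγS, hγx⟩

theorem Set.finite_preimage_val {α : Type*} {s t : Set α} (h : (s ∩ t).Finite) :
    (Subtype.val ⁻¹' t : Set s).Finite :=
  Set.Finite.of_finite_image (by rwa [Subtype.image_preimage_coe]) Subtype.val_injective.injOn

theorem Set.ncard_preimage_val {α : Type*} (s t : Set α) :
    (Subtype.val ⁻¹' t : Set s).ncard = (s ∩ t).ncard := by
  rw [← Set.ncard_image_of_injective _ Subtype.val_injective, Subtype.image_preimage_coe]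

theorem finrank_span_image_le_ncard {K M α : Type*} [DivisionRing K] [AddCommGroup M]
    [Module K M] {T : Set α} (hT : T.Finite) (f : α → M) :
    finrank K (span K (f '' T)) ≤ T.ncard := by
  have := (hT.image f).fintype
  calc finrank K (span K (f '' T)) ≤ (f '' T).toFinset.card := finrank_span_le_card _
    _ = (f '' T).ncard := (Set.ncard_eq_toFinset_card' _).symm
    _ ≤ T.ncard := Set.ncard_image_le hT

theorem ramanathan_steger_comparison_multiplicity_general
    (G : Type) [AddCommGroup G] [TopologicalSpace G] [IsTopologicalAddGroup G]
    (H : Type) [NormedAddCommGroup H] [InnerProductSpace ℂ H]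
    (Γ Λ : Set G) (hΓ : UnifDiscrete Γ) (hΛ : UnifDiscrete Λ)
    (N : ℕ) (g : Γ → Fin N → H) (A B : ℝ) (hA : 0 < A)
    (hRiesz : ∀ (s : Finset (Γ × Fin N)) (a : Γ × Fin N → ℂ),
      A * ∑ p ∈ s, ‖a p‖ ^ 2 ≤ ‖∑ p ∈ s, a p • g p.1 p.2‖ ^ 2 ∧
      ‖∑ p ∈ s, a p • g p.1 p.2‖ ^ 2 ≤ B * ∑ p ∈ s, ‖a p‖ ^ 2)
    (ε : ℝ) (K : Set G) (hK : IsCompact K)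
    (h : Λ → H)
    (hclose : ∀ (γ : Γ) (j : Fin N), Metric.infDist (g γ j)
      (Submodule.span ℂ (h '' {l : Λ | (l : G) ∈ (γ : G) +ᵥ K}) : Set H) < ε) :
    ∀ L : Set G, IsCompact L →
      (1 - ε / Real.sqrt A) * (N : ℝ) * ((Γ ∩ L).ncard : ℝ) ≤ ((Λ ∩ (L + K)).ncard : ℝ) := by
  intro L hL
  set Q : Set Γ := Subtype.val ⁻¹' L
  set T : Set Λ := Subtype.val ⁻¹' (L + K)
  have hQ : Q.Finite := Set.finite_preimage_val (hΓ.finite_inter_of_isCompact hL)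
  have hT : T.Finite := Set.finite_preimage_val (hΛ.finite_inter_of_isCompact (hL.add hK))
  let s : Finset (Γ × Fin N) := hQ.toFinset ×ˢ Finset.univ
  have := FiniteDimensional.span_of_finite ℂ (hT.image h)
  have hdist : ∀ p : s, Metric.infDist (g p.1.1 p.1.2) (span ℂ (h '' T)) ≤ ε := by
    intro p
    have hγ : (p.1.1 : G) ∈ L := by simpa [s, Q] using (Finset.mem_product.1 p.2).1
    refine (Metric.infDist_le_infDist_of_subset ?_ ⟨0, zero_mem _⟩).trans (hclose _ _).le
    exact span_mono (Set.image_mono fun l hl => Set.vadd_set_subset_add hγ hl)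
  calc (1 - ε / √A) * N * (Γ ∩ L).ncard = (1 - ε / √A) * Fintype.card s := by
        rw [Fintype.card_coe, Finset.card_product, Finset.card_univ, Fintype.card_fin,
          ← Set.ncard_eq_toFinset_card Q hQ, Set.ncard_preimage_val]
        push_cast
        ring
    _ ≤ finrank ℂ (span ℂ (h '' T)) :=
        (lowerRieszBound_subtype_of_forall_finset (fun s a => (hRiesz s a).1) s)
          |>.one_sub_div_sqrt_mul_card_le_finrank hA _ hdist
    _ ≤ T.ncard := by exact_mod_cast finrank_span_image_le_ncard hT h
    _ = (Λ ∩ (L + K)).ncard := by rw [Set.ncard_preimage_val]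

/-- The Ramanathan–Steger comparison principle, with multiplicity `N`. -/
theorem ramanathan_steger_comparison_multiplicity
    (G : Type) [AddCommGroup G] [TopologicalSpace G] [IsTopologicalAddGroup G]
    [LocallyCompactSpace G] [T2Space G]
    (H : Type) [NormedAddCommGroup H] [InnerProductSpace ℂ H] [CompleteSpace H]
    (Γ Λ : Set G) (hΓ : UnifDiscrete Γ) (hΛ : UnifDiscrete Λ)
    (N : ℕ) (hN : 0 < N) (g : Γ → Fin N → H) (A B : ℝ) (hA : 0 < A) (hB : 0 < B)
    (hRiesz : ∀ (s : Finset (Γ × Fin N)) (a : Γ × Fin N → ℂ),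
      A * ∑ p ∈ s, ‖a p‖ ^ 2 ≤ ‖∑ p ∈ s, a p • g p.1 p.2‖ ^ 2 ∧
      ‖∑ p ∈ s, a p • g p.1 p.2‖ ^ 2 ≤ B * ∑ p ∈ s, ‖a p‖ ^ 2)
    (ε : ℝ) (hε : 0 < ε) (K : Set G) (hK : IsCompact K)
    (h : Λ → H)
    (hclose : ∀ (γ : Γ) (j : Fin N), Metric.infDist (g γ j)
      (Submodule.span ℂ (h '' {l : Λ | (l : G) ∈ (γ : G) +ᵥ K}) : Set H) < ε) :
    ∀ L : Set G, IsCompact L →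
      (1 - ε / Real.sqrt A) * (N : ℝ) * ((Γ ∩ L).ncard : ℝ) ≤ ((Λ ∩ (L + K)).ncard : ℝ) :=
  ramanathan_steger_comparison_multiplicity_general G H Γ Λ hΓ hΛ N g A B hA hRiesz ε K hK h hclose
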